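/- Let U ∈ SL₂(ℤ), f a positive integer, and V = R_f U R_f⁻¹ where R_f = [[1,0],[0,f]]. Let q = ax² + bxy + cy² be an integral form with gcd(a, f) = 1. If q·V has integer coefficients, then V has integer entries (hence V ∈ SL₂(ℤ)). -/

import Mathlib

/-!
Conjugating by `R_f` gives `V = [[α, β/f], [fγ, δ]]` for `U = [[α, β], [γ, δ]]`, so only
`x = β/f` can fail to be integral. The `y²`-coefficient of `q·V` is `q(x, δ) = a x² + bδ x + cδ²`;
its integrality makes `x` a root of an integer polynomial with leading coefficient `a`, so by the
rational root theorem the denominator of `x` divides `a`. It also divides `f`, hence it is `1`.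
-/

/-- A binary quadratic form ax² + bxy + cy² with rational coefficients. -/
structure BQFQ where
  a : ℚ
  b : ℚ
  c : ℚ

namespace BQFQ

/-- Value of the form at (x, y). -/
def eval (q : BQFQ) (x y : ℚ) : ℚ := q.a * x ^ 2 + q.b * x * y + q.c * y ^ 2

/-- Discriminant b² - 4ac. -/
def disc (q : BQFQ) : ℚ := q.b ^ 2 - 4 * q.a * q.c

/-- Right action: (q·M)(x,y) = q(px + ry, sx + ty) for M = [[p,r],[s,t]]. -/
def act (q : BQFQ) (M : Matrix (Fin 2) (Fin 2) ℚ) : BQFQ :=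
  ⟨q.eval (M 0 0) (M 1 0),
   q.eval (M 0 0 + M 0 1) (M 1 0 + M 1 1) - q.eval (M 0 0) (M 1 0) - q.eval (M 0 1) (M 1 1),
   q.eval (M 0 1) (M 1 1)⟩

end BQFQ

theorem Rat.den_dvd_of_mul_sq_add_mul_eq_intCast {x : ℚ} {a m n : ℤ}
    (h : a * x ^ 2 + m * x = n) : (x.den : ℤ) ∣ a := by
  have hx : x * x.den = x.num := Rat.mul_den_eq_num x
  have hcop : IsCoprime (x.den : ℤ) x.num :=
    Int.isCoprime_iff_nat_coprime.2 (by simpa using x.reduced.symm)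
  have hcleared : a * x.num ^ 2 = x.den * (n * x.den - m * x.num) := by
    have : (a * x.num ^ 2 : ℚ) = x.den * (n * x.den - m * x.num) := by
      rw [← hx, ← h]; ring
    exact_mod_cast this
  exact (hcop.pow_right (n := 2)).dvd_of_dvd_mul_right ⟨_, hcleared⟩

theorem Matrix.conj_fin_two_diag_one {K : Type*} [Field K] {f : K} (hf : f ≠ 0)
    (M : Matrix (Fin 2) (Fin 2) K) :
    !![1, 0; 0, f] * M * !![1, 0; 0, f⁻¹] = !![M 0 0, M 0 1 / f; f * M 1 0, M 1 1] := by
  ext i j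
  fin_cases i <;> fin_cases j <;>
    simp [Matrix.mul_apply, Matrix.vecMul, dotProduct, Fin.sum_univ_two, div_eq_mul_inv,
      mul_inv_cancel_right₀ hf, mul_comm f]

theorem stmt14 (U : Matrix.SpecialLinearGroup (Fin 2) ℤ) (f : ℤ)
    (hf : 0 < f) (V : Matrix (Fin 2) (Fin 2) ℚ)
    (hV : V = !![1, 0; 0, (f : ℚ)] * U.1.map (Int.cast : ℤ → ℚ) * !![1, 0; 0, ((f : ℚ))⁻¹])
    (a b c : ℤ) (ha : Int.gcd a f = 1)
    (hint : (∃ n : ℤ, ((BQFQ.mk (a : ℚ) (b : ℚ) (c : ℚ)).act V).a = (n : ℚ)) ∧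
            (∃ n : ℤ, ((BQFQ.mk (a : ℚ) (b : ℚ) (c : ℚ)).act V).b = (n : ℚ)) ∧
            (∃ n : ℤ, ((BQFQ.mk (a : ℚ) (b : ℚ) (c : ℚ)).act V).c = (n : ℚ))) :
    ∃ W : Matrix.SpecialLinearGroup (Fin 2) ℤ, W.1.map (Int.cast : ℤ → ℚ) = V := by
  have hfQ : (f : ℚ) ≠ 0 := Int.cast_ne_zero.2 hf.ne'
  rw [Matrix.conj_fin_two_diag_one hfQ] at hV
  set x : ℚ := (U 0 1 : ℚ) / f
  obtain ⟨n, hn⟩ := hint.2.2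
  have hxa : (x.den : ℤ) ∣ a := by
    refine Rat.den_dvd_of_mul_sq_add_mul_eq_intCast (m := b * U 1 1) (n := n - c * U 1 1 ^ 2) ?_
    have hq : a * x ^ 2 + b * x * U 1 1 + c * U 1 1 ^ 2 = n := by
      simpa [hV, BQFQ.act, BQFQ.eval] using hn
    push_cast
    linear_combination hq
  have hxf : (x.den : ℤ) ∣ f := by simpa [Rat.divInt_eq_div] using Rat.den_dvd (U 0 1) f
  have hx1 : x.den = 1 := by
    have := Int.dvd_gcd hxa hxf
    rw [ha] at this
    exact Nat.dvd_one.1 (by exact_mod_cast this)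
  obtain ⟨e, he⟩ := (Rat.den_div_intCast_eq_one_iff _ _ hf.ne').1 hx1
  refine ⟨⟨!![U 0 0, e; f * U 1 0, U 1 1], ?_⟩, ?_⟩
  · have hdet := U.2
    rw [Matrix.det_fin_two] at hdet
    rw [Matrix.det_fin_two_of]
    linear_combination hdet + U 1 0 * he
  · rw [hV]
    ext i j
    fin_cases i <;> fin_cases j <;> simp [he, hfQ]
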